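/- arXiv:1812.02612 — 7 statements merged into one kernel-verified Lean document; each statement's English description precedes it below -/
import Mathlib

section
/- Let l = 1 + l₁x₁ + ... + lₙxₙ be an affine linear form in R_{≤1}. Then for every polynomial f of degree at most d, the dual polynomial of l^d evaluated at f equals the evaluation of f at the point (l₁,...,lₙ): τ(l^d)(f) = f(l₁,...,lₙ). -/
open MvPolynomial

noncomputable section

variable {k : Type*}

def mBin [Field k] {n : ℕ} (d : ℕ) (α : Fin n →₀ ℕ) : k :=
  (d.factorial : k) /
    (((α.prod fun _ m => m.factorial : ℕ) : k) * ((d - α.sum fun _ m => m).factorial : ℕ))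

/-- The apolar product on polynomials of degree at most `d`. -/
def apolar [Field k] {n : ℕ} (d : ℕ) (f g : MvPolynomial (Fin n) k) : k :=
  ∑ α ∈ f.support, f.coeff α * g.coeff α / mBin d α

/-! The binomial and multinomial theorems give the coefficient of `x^β` in
`(1 + a₁x₁ + ⋯ + aₙxₙ)^d` as `C(d, |β|) · multinomial(β) · a^β`, and `C(d, |β|) · multinomial(β)`
is exactly the apolar weight `mBin d β = d! / (β! (d - |β|)!)`. Dividing by the weight leaves `a^β`,
so the apolar product collapses to `∑ f_β a^β = f(a)`. -/

namespace MvPolynomial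

theorem coeff_one_add_sum_C_mul_X_pow {R σ : Type*} [CommSemiring R] [Fintype σ]
    (a : σ → R) (β : σ →₀ ℕ) (d : ℕ) :
    coeff β ((1 + ∑ i, C (a i) * X i) ^ d) =
      d.choose (β.sum fun _ m => m) * β.multinomial * ∏ i, a i ^ β i := by
  rw [add_comm, add_pow, coeff_sum]
  simp only [one_pow, mul_one, ← smul_eq_C_mul, ← nsmul_eq_mul', coeff_smul,
    coeff_linearCombination_X_pow_of_fintype]
  simp only [smul_ite, smul_zero, nsmul_eq_mul, Finset.sum_ite_eq, Finset.mem_range,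
    Finsupp.prod_fintype _ _ (fun i => pow_zero (a i))]
  split_ifs with hβ
  · ring
  · rw [Nat.choose_eq_zero_of_lt (by omega), Nat.cast_zero]; ring

end MvPolynomial

theorem Finsupp.choose_mul_multinomial_mul_factorial_mul_factorial {α : Type*} (β : α →₀ ℕ)
    {d : ℕ} (hβ : (β.sum fun _ m => m) ≤ d) :
    d.choose (β.sum fun _ m => m) * β.multinomial *
      ((β.prod fun _ m => m.factorial) * (d - β.sum fun _ m => m).factorial) = d.factorial := by
  have hspec : (β.prod fun _ m => m.factorial) * β.multinomial = (β.sum fun _ m => m).factorial :=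
    Nat.multinomial_spec β.support β
  rw [← Nat.choose_mul_factorial_mul_factorial hβ, ← hspec]
  ring

theorem mBin_eq_choose_mul_multinomial [Field k] [CharZero k] {n d : ℕ} (β : Fin n →₀ ℕ)
    (hβ : (β.sum fun _ m => m) ≤ d) :
    (mBin d β : k) = d.choose (β.sum fun _ m => m) * β.multinomial := by
  have h := β.choose_mul_multinomial_mul_factorial_mul_factorial hβ
  have hden : (β.prod fun _ m => m.factorial) * (d - β.sum fun _ m => m).factorial ≠ 0 :=
    right_ne_zero_of_mul (h ▸ d.factorial_ne_zero)
  rw [mBin, div_eq_iff (by exact_mod_cast hden)]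
  exact_mod_cast h.symm

theorem apolar_eq_sum_support_right [Field k] {n : ℕ} (d : ℕ) (f g : MvPolynomial (Fin n) k) :
    apolar d f g = ∑ α ∈ g.support, f.coeff α * g.coeff α / mBin d α := by
  have hf : ∀ α ∉ f.support, f.coeff α * g.coeff α / mBin d α = 0 := fun α hα => by
    rw [notMem_support_iff.mp hα, zero_mul, zero_div]
  have hg : ∀ α ∉ g.support, f.coeff α * g.coeff α / mBin d α = 0 := fun α hα => by
    rw [notMem_support_iff.mp hα, mul_zero, zero_div]
  rw [apolar, ← Finset.sum_subset (Finset.inter_subset_left (s₂ := g.support))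
      fun α hαf hα => hg α fun hαg => hα (Finset.mem_inter.mpr ⟨hαf, hαg⟩),
    Finset.sum_subset Finset.inter_subset_right
      fun α hαg hα => hf α fun hαf => hα (Finset.mem_inter.mpr ⟨hαf, hαg⟩)]

theorem stmt3 [Field k] [CharZero k] {n d : ℕ}
    (a : Fin n → k) (f : MvPolynomial (Fin n) k) (hf : f.totalDegree ≤ d) :
    apolar d ((1 + ∑ i, C (a i) * X i) ^ d) f = eval a f := by
  rw [apolar_eq_sum_support_right, eval_eq']
  refine Finset.sum_congr rfl fun β hβ => ?_
  have hβd : (β.sum fun _ m => m) ≤ d := (le_totalDegree hβ).trans hf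
  have hmBin : (mBin d β : k) ≠ 0 := by
    rw [mBin_eq_choose_mul_multinomial β hβd]
    exact mul_ne_zero (Nat.cast_ne_zero.mpr (Nat.choose_pos hβd).ne')
      (Nat.cast_ne_zero.mpr (Nat.multinomial_pos _ _).ne')
  rw [coeff_one_add_sum_C_mul_X_pow, ← mBin_eq_choose_mul_multinomial β hβd]
  field_simp

end
end

section
/- Let l = 1 + l₁x₁ + ... + lₙxₙ and g = 1 + g₁x₁ + ... + gₙxₙ be affine linear forms and d ≥ 1 an integer. Then the dual polynomial of l^{d−1}·g, as a functional on R_{≤d}, equals 𝟙_l + (1/d)·𝟙_l ∘ [Σᵢ (gᵢ − lᵢ) ∂/∂xᵢ], i.e. evaluation at (l₁,...,lₙ) plus (1/d) times evaluation at (l₁,...,lₙ) composed with the directional derivative in direction (g₁−l₁,...,gₙ−lₙ). -/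
open MvPolynomial

noncomputable section

variable {k : Type*}

/-!
Write `g = l + ∑ᵢ (gᵢ - lᵢ) xᵢ`, so that `l ^ (d - 1) * g = l ^ d + ∑ᵢ (gᵢ - lᵢ) xᵢ l ^ (d - 1)`.
By the multinomial theorem the coefficient of `x^α` in `l ^ m` is `mBin m α * l^α`, and
`d * mBin (d - 1) (α - eᵢ) = αᵢ * mBin d α`. Hence the coefficient of `x^α` in `l ^ (d - 1) * g`,
divided by `mBin d α`, is `l^α + d⁻¹ ∑ᵢ (gᵢ - lᵢ) αᵢ l^(α - eᵢ)`: the value at `l` of `x^α` plus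
`d⁻¹` times the value at `l` of its derivative in the direction `g - l`.
-/

section
variable {σ : Type*}

theorem Finsupp.prod_factorial_mul_multinomial (α : σ →₀ ℕ) :
    (α.prod fun _ m => m.factorial) * α.multinomial = (α.sum fun _ m => m).factorial :=
  Nat.multinomial_spec _ _

theorem Finsupp.mul_prod_tsub_single {M : Type*} [CommMonoid M] {g : σ → ℕ → M}
    (hg : ∀ i, g i 0 = 1) (α : σ →₀ ℕ) (i : σ) {c : M} (hc : c * g i (α i - 1) = g i (α i)) :
    c * (α - Finsupp.single i 1).prod g = α.prod g := by
  classical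
  have herase : (α - Finsupp.single i 1).erase i = α.erase i := by
    ext j
    rcases eq_or_ne j i with rfl | hj <;> simp [Finsupp.erase_ne, *]
  rw [← Finsupp.mul_prod_erase' _ i _ hg, ← Finsupp.mul_prod_erase' α i _ hg, herase, ← mul_assoc]
  simp [hc]

theorem Finsupp.sum_tsub_single_add_one (α : σ →₀ ℕ) {i : σ} (hi : α i ≠ 0) :
    ((α - Finsupp.single i 1).sum fun _ m => m) + 1 = α.sum fun _ m => m := by
  have : α = (α - Finsupp.single i 1) + Finsupp.single i 1 :=
    (tsub_add_cancel_of_le (Finsupp.single_le_iff.mpr (Nat.one_le_iff_ne_zero.mpr hi))).symm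
  conv_rhs => rw [this]
  rw [Finsupp.sum_add_index' (fun _ => rfl) (fun _ _ _ => rfl), Finsupp.sum_single_index rfl]
end

section
variable [Field k] [CharZero k] {n : ℕ}

theorem mBin_ne_zero (d : ℕ) (α : Fin n →₀ ℕ) : (mBin d α : k) ≠ 0 := by
  simp [mBin, Nat.factorial_ne_zero]

theorem mBin_eq_choose_mul_multinomial_s5 {m : ℕ} {α : Fin n →₀ ℕ} (hα : (α.sum fun _ e => e) ≤ m) :
    (mBin m α : k) = ((m.choose (α.sum fun _ e => e) * α.multinomial : ℕ) : k) := by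
  rw [mBin, div_eq_iff (by simp [Nat.factorial_ne_zero]), ← Nat.cast_mul, ← Nat.cast_mul]
  congr 1
  rw [← Nat.choose_mul_factorial_mul_factorial hα, ← α.prod_factorial_mul_multinomial]
  ring

theorem coeff_one_add_sum_pow (a : Fin n → k) {m : ℕ} {α : Fin n →₀ ℕ}
    (hα : (α.sum fun _ e => e) ≤ m) :
    coeff α ((1 + ∑ i, C (a i) * X i) ^ m) = mBin m α * α.prod fun i e => a i ^ e := by
  have hL : 1 + ∑ i, C (a i) * X i = ∑ i, a i • X i + (1 : MvPolynomial (Fin n) k) := by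
    simp only [smul_eq_C_mul, add_comm]
  have hterm : ∀ j, coeff α
      ((∑ i, a i • X i) ^ j * 1 ^ (m - j) * (m.choose j : MvPolynomial (Fin n) k)) =
      if (α.sum fun _ e => e) = j then (m.choose j * α.multinomial : ℕ) * α.prod fun i e => a i ^ e
      else 0 := by
    intro j
    rw [one_pow, mul_one, ← map_natCast C, mul_comm, coeff_C_mul,
      coeff_linearCombination_X_pow_of_fintype]
    split_ifs <;> push_cast <;> ring
  rw [hL, add_pow, coeff_sum, Finset.sum_congr rfl fun j _ => hterm j, Finset.sum_ite_eq,
    if_pos (Finset.mem_range.mpr (Nat.lt_succ_of_le hα)), mBin_eq_choose_mul_multinomial_s5 hα]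

theorem mBin_tsub_single {d : ℕ} (hd : d ≠ 0) {α : Fin n →₀ ℕ} (hα : (α.sum fun _ e => e) ≤ d)
    {i : Fin n} (hi : α i ≠ 0) :
    (d : k) * mBin (d - 1) (α - Finsupp.single i 1) = α i * mBin d α := by
  have hsum := α.sum_tsub_single_add_one hi
  have hprod : α i * (α - Finsupp.single i 1).prod (fun _ m => m.factorial) =
      α.prod fun _ m => m.factorial :=
    α.mul_prod_tsub_single (fun _ => Nat.factorial_zero) i (Nat.mul_factorial_pred hi)
  have hfact : (d : k) * ((d - 1).factorial : ℕ) = (d.factorial : ℕ) := by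
    exact_mod_cast Nat.mul_factorial_pred hd
  have hdeg : d - 1 - ((α - Finsupp.single i 1).sum fun _ m => m) = d - α.sum fun _ m => m := by
    omega
  rw [mBin, mBin, hdeg, ← hprod, ← hfact]
  push_cast
  field_simp

theorem coeff_X_mul_one_add_sum_pow_pred (a : Fin n → k) {d : ℕ} (hd : d ≠ 0) {α : Fin n →₀ ℕ}
    (hα : (α.sum fun _ e => e) ≤ d) (i : Fin n) :
    coeff α (X i * (1 + ∑ j, C (a j) * X j) ^ (d - 1)) =
      (d : k)⁻¹ * mBin d α * α i * (α - Finsupp.single i 1).prod fun j e => a j ^ e := by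
  rw [coeff_X_mul']
  by_cases hi : α i = 0
  · simp [hi]
  have hdeg : ((α - Finsupp.single i 1).sum fun _ e => e) ≤ d - 1 := by
    have := α.sum_tsub_single_add_one hi
    omega
  have hd' : (d : k) ≠ 0 := Nat.cast_ne_zero.mpr hd
  rw [if_pos (Finsupp.mem_support_iff.mpr hi), coeff_one_add_sum_pow a hdeg,
    ← mul_right_inj' hd', ← mul_assoc, mBin_tsub_single hd hα hi]
  field_simp

theorem coeff_one_add_sum_pow_pred_mul (a b : Fin n → k) {d : ℕ} (hd : d ≠ 0) {α : Fin n →₀ ℕ}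
    (hα : (α.sum fun _ e => e) ≤ d) :
    coeff α ((1 + ∑ i, C (a i) * X i) ^ (d - 1) * (1 + ∑ i, C (b i) * X i)) =
      mBin d α * ((α.prod fun i e => a i ^ e) + (d : k)⁻¹ *
        ∑ i, (b i - a i) * α i * (α - Finsupp.single i 1).prod fun j e => a j ^ e) := by
  have hb : 1 + ∑ i, C (b i) * X i =
      (1 + ∑ i, C (a i) * X i) + ∑ i, C (b i - a i) * X i := by
    simp only [map_sub, sub_mul, Finset.sum_sub_distrib]
    ring
  have hsplit : (1 + ∑ i, C (a i) * X i) ^ (d - 1) * (1 + ∑ i, C (b i) * X i) =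
      (1 + ∑ i, C (a i) * X i) ^ d +
        ∑ i, C (b i - a i) * (X i * (1 + ∑ j, C (a j) * X j) ^ (d - 1)) := by
    rw [hb, mul_add, pow_sub_one_mul hd, Finset.mul_sum]
    congr 1
    exact Finset.sum_congr rfl fun i _ => by ring
  simp only [hsplit, coeff_add, coeff_sum, coeff_C_mul, coeff_one_add_sum_pow a hα,
    coeff_X_mul_one_add_sum_pow_pred a hd hα]
  rw [mul_add, Finset.mul_sum, Finset.mul_sum]
  congr 1
  exact Finset.sum_congr rfl fun i _ => by ring

omit [CharZero k] in
theorem apolar_comm (d : ℕ) (p q : MvPolynomial (Fin n) k) : apolar d p q = apolar d q p := by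
  classical
  have hp : apolar d p q = ∑ α ∈ p.support ∪ q.support, p.coeff α * q.coeff α / mBin d α :=
    Finset.sum_subset Finset.subset_union_left fun α _ hα => by
      simp [MvPolynomial.notMem_support_iff.mp hα]
  have hq : apolar d q p = ∑ α ∈ p.support ∪ q.support, q.coeff α * p.coeff α / mBin d α :=
    Finset.sum_subset Finset.subset_union_right fun α _ hα => by
      simp [MvPolynomial.notMem_support_iff.mp hα]
  simp only [hp, hq, mul_comm]

end

theorem MvPolynomial.eval_eq_sum_prod {σ R : Type*} [CommSemiring R] (a : σ → R)
    (f : MvPolynomial σ R) :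
    eval a f = ∑ α ∈ f.support, f.coeff α * α.prod fun i e => a i ^ e := by
  conv_lhs => rw [f.as_sum]
  simp only [map_sum, eval_monomial]

theorem MvPolynomial.eval_pderiv_eq_sum {σ R : Type*} [CommSemiring R] (a : σ → R)
    (f : MvPolynomial σ R) (i : σ) :
    eval a (pderiv i f) =
      ∑ α ∈ f.support, f.coeff α * α i * (α - Finsupp.single i 1).prod fun j e => a j ^ e := by
  conv_lhs => rw [f.as_sum]
  simp only [map_sum, pderiv_monomial, eval_monomial]

theorem stmt5 [Field k] [CharZero k] {n d : ℕ} (hd : 1 ≤ d)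
    (a b : Fin n → k) (f : MvPolynomial (Fin n) k) (hf : f.totalDegree ≤ d) :
    apolar d ((1 + ∑ i, C (a i) * X i) ^ (d - 1) * (1 + ∑ i, C (b i) * X i)) f =
      eval a f + (d : k)⁻¹ * ∑ i, (b i - a i) * eval a (pderiv i f) := by
  have hterm : ∀ α ∈ f.support,
      f.coeff α * coeff α ((1 + ∑ i, C (a i) * X i) ^ (d - 1) * (1 + ∑ i, C (b i) * X i)) /
          mBin d α =
        f.coeff α * (α.prod fun i e => a i ^ e) + (d : k)⁻¹ * ∑ i, (b i - a i) *
          (f.coeff α * α i * (α - Finsupp.single i 1).prod fun j e => a j ^ e) := by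
    intro α hα
    rw [coeff_one_add_sum_pow_pred_mul a b (by omega) ((le_totalDegree hα).trans hf), mul_div_assoc,
      mul_div_cancel_left₀ _ (mBin_ne_zero d α), mul_add, mul_left_comm _ (d : k)⁻¹, Finset.mul_sum]
    congr 2
    exact Finset.sum_congr rfl fun i _ => by ring
  rw [apolar_comm, apolar, Finset.sum_congr rfl hterm, Finset.sum_add_distrib, ← Finset.mul_sum,
    Finset.sum_comm, eval_eq_sum_prod]
  simp only [eval_pderiv_eq_sum, Finset.mul_sum]

end
end

section
/- Let I ⊆ R = k[x₁,...,xₙ] be a zero-dimensional ideal with variety V(I) = {ζ₁,...,ζ_d} ⊆ kⁿ (k algebraically closed). Then for every a ∈ A = R/I, the set of eigenvalues of the multiplication operator M_a : A → A equals {a(ζ₁),...,a(ζ_d)}. -/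
/-! In a finite-dimensional algebra the eigenvalues of multiplication by `a` form the spectrum
of `a`. The class of `a - μ` fails to be invertible in `R/I` exactly when `I + (a - μ)` is a proper
ideal, and by the weak Nullstellensatz this means that `I` and `a - μ` have a common zero, i.e.
that `a` takes the value `μ` at a point of `V(I)`. -/

open MvPolynomial

noncomputable section

variable {k : Type*}

section

variable {K A : Type*} [Field K] [Ring A] [Algebra K A]

theorem Algebra.spectrum_lmul (a : A) : spectrum K (Algebra.lmul K A a) = spectrum K a := by
  ext μ
  simp only [spectrum.mem_iff, ← Algebra.lmul_isUnit_iff (R := K), map_sub, AlgHom.commutes]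

theorem Module.End.hasEigenvalue_mulLeft_iff_mem_spectrum [FiniteDimensional K A] (a : A)
    (μ : K) : Module.End.HasEigenvalue (LinearMap.mulLeft K a) μ ↔ μ ∈ spectrum K a := by
  rw [← Algebra.spectrum_lmul, Module.End.hasEigenvalue_iff_mem_spectrum]
  rfl

end

theorem Ideal.Quotient.isUnit_mk_iff_sup_span_singleton_eq_top {R : Type*} [CommRing R]
    (I : Ideal R) (f : R) : IsUnit (Ideal.Quotient.mk I f) ↔ I ⊔ Ideal.span {f} = ⊤ := by
  rw [isUnit_iff_exists_inv, Ideal.eq_top_iff_one, Submodule.mem_sup]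
  constructor
  · rintro ⟨g, hg⟩
    obtain ⟨g, rfl⟩ := Ideal.Quotient.mk_surjective g
    refine ⟨1 - f * g, ?_, f * g, Ideal.mem_span_singleton'.mpr ⟨g, mul_comm _ _⟩, by ring⟩
    rw [← Ideal.Quotient.eq_zero_iff_mem, map_sub, map_one, map_mul, hg, sub_self]
  · rintro ⟨p, hp, q, hq, hpq⟩
    obtain ⟨g, rfl⟩ := Ideal.mem_span_singleton'.mp hq
    refine ⟨Ideal.Quotient.mk I g, ?_⟩
    rw [← map_mul, ← map_one (Ideal.Quotient.mk I), Ideal.Quotient.eq]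
    convert I.neg_mem hp using 1
    linear_combination hpq

namespace MvPolynomial

variable {σ : Type*}

theorem zeroLocus_sup_span_singleton {K : Type*} [Field k] [Field K] [Algebra k K]
    (I : Ideal (MvPolynomial σ k)) (f : MvPolynomial σ k) :
    zeroLocus K (I ⊔ Ideal.span {f}) = zeroLocus K I ∩ {x | aeval x f = 0} := by
  ext x
  simp only [mem_zeroLocus_iff, Set.mem_inter_iff, Set.mem_ofPred_eq, Submodule.mem_sup,
    Ideal.mem_span_singleton']
  constructor
  · intro h
    exact ⟨fun p hp => h p ⟨p, hp, 0, ⟨0, zero_mul f⟩, add_zero p⟩,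
      h f ⟨0, I.zero_mem, f, ⟨1, one_mul f⟩, zero_add f⟩⟩
  · rintro ⟨hI, hf⟩ _ ⟨p, hp, _, ⟨g, rfl⟩, rfl⟩
    simp [hI p hp, hf]

variable [Field k] [IsAlgClosed k] [Finite σ]

theorem zeroLocus_eq_empty_iff (J : Ideal (MvPolynomial σ k)) :
    zeroLocus k J = ∅ ↔ J = ⊤ := by
  refine ⟨fun h => ?_, fun h => h ▸ zeroLocus_top⟩
  rw [← Ideal.radical_eq_top, ← vanishingIdeal_zeroLocus_eq_radical (K := k), h,
    vanishingIdeal_empty]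

theorem spectrum_quotient_mk_eq_image_zeroLocus (I : Ideal (MvPolynomial σ k))
    (a : MvPolynomial σ k) :
    spectrum k (Ideal.Quotient.mk I a) = (fun x => eval x a) '' zeroLocus k I := by
  ext μ
  have hsub : algebraMap k _ μ - Ideal.Quotient.mk I a = Ideal.Quotient.mk I (C μ - a) := rfl
  rw [spectrum.mem_iff, hsub, Ideal.Quotient.isUnit_mk_iff_sup_span_singleton_eq_top,
    ← zeroLocus_eq_empty_iff, zeroLocus_sup_span_singleton, ← ne_eq,
    ← Set.nonempty_iff_ne_empty]
  simp only [Set.Nonempty, Set.mem_inter_iff, Set.mem_ofPred_eq, Set.mem_image,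
    map_sub, aeval_C, Algebra.algebraMap_self, RingHom.id_apply, sub_eq_zero]
  exact exists_congr fun x => and_congr_right' eq_comm

end MvPolynomial

theorem stmt7_general [Field k] [IsAlgClosed k] {n d : ℕ}
    (I : Ideal (MvPolynomial (Fin n) k))
    (hfin : FiniteDimensional k (MvPolynomial (Fin n) k ⧸ I))
    (ζ : Fin d → (Fin n → k))
    (hV : {x : Fin n → k | ∀ f ∈ I, eval x f = 0} = Set.range ζ)
    (a : MvPolynomial (Fin n) k) (μ : k) :
    Module.End.HasEigenvalue
        (LinearMap.mulLeft k (Ideal.Quotient.mk I a) :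
          Module.End k (MvPolynomial (Fin n) k ⧸ I)) μ ↔
      ∃ i, eval (ζ i) a = μ := by
  have hV' : zeroLocus k I = Set.range ζ := hV
  rw [Module.End.hasEigenvalue_mulLeft_iff_mem_spectrum,
    spectrum_quotient_mk_eq_image_zeroLocus, hV', ← Set.range_comp]
  rfl

theorem stmt7 [Field k] [IsAlgClosed k] [CharZero k] {n d : ℕ}
    (I : Ideal (MvPolynomial (Fin n) k)) (hI : I ≠ ⊤)
    (hfin : FiniteDimensional k (MvPolynomial (Fin n) k ⧸ I))
    (ζ : Fin d → (Fin n → k))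
    (hV : {x : Fin n → k | ∀ f ∈ I, eval x f = 0} = Set.range ζ)
    (a : MvPolynomial (Fin n) k) (μ : k) :
    Module.End.HasEigenvalue
        (LinearMap.mulLeft k (Ideal.Quotient.mk I a) :
          Module.End k (MvPolynomial (Fin n) k ⧸ I)) μ ↔
      ∃ i, eval (ζ i) a = μ :=
  stmt7_general I hfin ζ hV a μ

end
end

section
/- Let I ⊆ R = k[x₁,...,xₙ] be a zero-dimensional ideal with V(I) = {ζ₁,...,ζ_d}. An element v ∈ (R/I)* is a common eigenvector of all the transpose multiplication operators M_{x₁}^t,...,M_{xₙ}^t if and only if v = c·𝟙_{ζⱼ} for some j ∈ {1,...,d} and some nonzero scalar c ∈ k, where 𝟙_{ζⱼ} is the evaluation functional at ζⱼ restricted to R/I. -/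
/-!
If `v ∘ M_{x_j} = μ_j • v` for every `j`, then induction on `f` via the eigen-equations gives
`v (f) = v (1) · f(μ)` for every polynomial `f`. Hence `v ≠ 0` forces `v (1) ≠ 0`, and `v` vanishing on
`I` forces `μ ∈ V(I)`; conversely a multiple of an evaluation is an eigenvector with eigenvalues
the coordinates of the point.
-/

open MvPolynomial

noncomputable section

variable {k : Type*}

namespace MvPolynomial

variable {σ : Type*}

section CommRing

variable [CommRing k] {I : Ideal (MvPolynomial σ k)} {v : Module.Dual k (MvPolynomial σ k ⧸ I)}

theorem dual_apply_mk_eq_mul_eval_of_comp_mulLeft_X {μ : σ → k}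
    (hμ : ∀ j, v ∘ₗ LinearMap.mulLeft k (Ideal.Quotient.mk I (X j)) = μ j • v)
    (f : MvPolynomial σ k) :
    v (Ideal.Quotient.mk I f) = v (Ideal.Quotient.mk I 1) * eval μ f := by
  induction f using MvPolynomial.induction_on with
  | C a =>
    have hCa : Ideal.Quotient.mk I (C a) = a • Ideal.Quotient.mk I 1 := by
      rw [map_one, ← Algebra.algebraMap_eq_smul_one]
      rfl
    rw [hCa, map_smul, eval_C, smul_eq_mul, mul_comm]
  | add p q hp hq => rw [map_add, map_add, hp, hq, map_add, mul_add]
  | mul_X p j hp =>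
    have hX := LinearMap.congr_fun (hμ j) (Ideal.Quotient.mk I p)
    rw [LinearMap.comp_apply, LinearMap.mulLeft_apply, ← map_mul, mul_comm] at hX
    rw [hX, LinearMap.smul_apply, hp, eval_mul, eval_X, smul_eq_mul]
    ring

theorem dual_comp_mulLeft_X_eq_smul_of_apply_mk_eq {c : k} {x : σ → k}
    (h : ∀ f, v (Ideal.Quotient.mk I f) = c * eval x f) (j : σ) :
    v ∘ₗ LinearMap.mulLeft k (Ideal.Quotient.mk I (X j)) = x j • v := by
  refine LinearMap.ext fun y => ?_
  obtain ⟨f, rfl⟩ := Ideal.Quotient.mk_surjective y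
  rw [LinearMap.comp_apply, LinearMap.mulLeft_apply, ← map_mul, LinearMap.smul_apply, h, h,
    eval_mul, eval_X, smul_eq_mul]
  ring

theorem dual_eq_zero_iff_of_apply_mk_eq {c : k} {x : σ → k}
    (h : ∀ f, v (Ideal.Quotient.mk I f) = c * eval x f) : v = 0 ↔ c = 0 := by
  refine ⟨fun hv => by simpa [hv, eq_comm] using h 1, fun hc => LinearMap.ext fun y => ?_⟩
  obtain ⟨f, rfl⟩ := Ideal.Quotient.mk_surjective y
  rw [h, hc, zero_mul, LinearMap.zero_apply]

end CommRing

theorem eval_eq_zero_of_dual_apply_mk_eq [Field k] {I : Ideal (MvPolynomial σ k)}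
    {v : Module.Dual k (MvPolynomial σ k ⧸ I)} {c : k} {x : σ → k}
    (h : ∀ f, v (Ideal.Quotient.mk I f) = c * eval x f) (hc : c ≠ 0) {f : MvPolynomial σ k}
    (hf : f ∈ I) : eval x f = 0 := by
  have hvf : v (Ideal.Quotient.mk I f) = 0 := by rw [Ideal.Quotient.eq_zero_iff_mem.mpr hf, map_zero]
  exact (mul_eq_zero.mp (h f ▸ hvf)).resolve_left hc

end MvPolynomial

theorem stmt8_general [Field k] {n d : ℕ}
    (I : Ideal (MvPolynomial (Fin n) k))
    (ζ : Fin d → (Fin n → k))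
    (hV : {x : Fin n → k | ∀ f ∈ I, eval x f = 0} = Set.range ζ)
    (v : Module.Dual k (MvPolynomial (Fin n) k ⧸ I)) :
    (v ≠ 0 ∧ ∀ j : Fin n, ∃ μ : k,
        v ∘ₗ LinearMap.mulLeft k (Ideal.Quotient.mk I (X j)) = μ • v) ↔
      ∃ (i : Fin d) (c : k), c ≠ 0 ∧
        ∀ f : MvPolynomial (Fin n) k, v (Ideal.Quotient.mk I f) = c * eval (ζ i) f := by
  constructor
  · rintro ⟨hv, hev⟩
    choose μ hμ using hev
    have hvμ := dual_apply_mk_eq_mul_eval_of_comp_mulLeft_X hμ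
    have hc : v (Ideal.Quotient.mk I 1) ≠ 0 := mt (dual_eq_zero_iff_of_apply_mk_eq hvμ).mpr hv
    have hμV : μ ∈ {x : Fin n → k | ∀ f ∈ I, eval x f = 0} :=
      fun f hf => eval_eq_zero_of_dual_apply_mk_eq hvμ hc hf
    obtain ⟨i, rfl⟩ := hV ▸ hμV
    exact ⟨i, _, hc, hvμ⟩
  · rintro ⟨i, c, hc, h⟩
    exact ⟨mt (dual_eq_zero_iff_of_apply_mk_eq h).mp hc,
      fun j => ⟨ζ i j, dual_comp_mulLeft_X_eq_smul_of_apply_mk_eq h j⟩⟩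

theorem stmt8 [Field k] [IsAlgClosed k] [CharZero k] {n d : ℕ}
    (I : Ideal (MvPolynomial (Fin n) k))
    (hfin : FiniteDimensional k (MvPolynomial (Fin n) k ⧸ I))
    (ζ : Fin d → (Fin n → k))
    (hV : {x : Fin n → k | ∀ f ∈ I, eval x f = 0} = Set.range ζ)
    (v : Module.Dual k (MvPolynomial (Fin n) k ⧸ I)) :
    (v ≠ 0 ∧ ∀ j : Fin n, ∃ μ : k,
        v ∘ₗ LinearMap.mulLeft k (Ideal.Quotient.mk I (X j)) = μ • v) ↔
      ∃ (i : Fin d) (c : k), c ≠ 0 ∧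
        ∀ f : MvPolynomial (Fin n) k, v (Ideal.Quotient.mk I f) = c * eval (ζ i) f :=
  stmt8_general I ζ hV v

end
end

section
/- Let Λ ∈ R*. The following are equivalent: (i) there exist nonzero scalars λ₁,...,λ_r ∈ k and distinct points ζ₁,...,ζ_r ∈ kⁿ such that Λ = Σᵢ λᵢ 𝟙_{ζᵢ} (a linear combination of evaluation functionals); (ii) the Hankel operator H_Λ has rank r and the ideal I_Λ = ker H_Λ is radical. -/
/-!
(i) ⇒ (ii): interpolation at the distinct points ζᵢ shows that, when all λᵢ ≠ 0, `I_Λ` is the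
ideal of polynomials vanishing at every ζᵢ, i.e. the kernel of the surjective evaluation map
`R → kʳ`. Hence `R ⧸ I_Λ ≅ kʳ` is reduced, and its dimension `r` is the rank of `H_Λ`.

(ii) ⇒ (i): `A = R ⧸ I_Λ` is a finite-dimensional reduced algebra over the algebraically closed
field `k`, so every maximal ideal of `A` is the kernel of a character `A → k` and these kernels
meet in the nilradical `0`; therefore the characters span the dual of `A`. Since `Λ` vanishes on
`I_Λ` it factors through `A`, so it is a finite combination of evaluations at distinct points
with nonzero coefficients, and by the first part the number of points is `rank H_Λ = r`.
-/

open MvPolynomial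

noncomputable section

variable {k : Type*}

def hankelKer [Field k] {n : ℕ} (Λ : Module.Dual k (MvPolynomial (Fin n) k)) :
    Ideal (MvPolynomial (Fin n) k) where
  carrier := {f | ∀ g, Λ (f * g) = 0}
  zero_mem' := by intro g; simp
  add_mem' := by
    intro a b ha hb g
    rw [add_mul, map_add, ha g, hb g, add_zero]
  smul_mem' := by
    intro c f hf g
    simp only [smul_eq_mul, Set.mem_setOf_eq] at *
    rw [mul_comm c f, mul_assoc]
    exact hf _

def evalDual [CommSemiring k] {n : ℕ} (ζ : Fin n → k) :
    Module.Dual k (MvPolynomial (Fin n) k) := (aeval ζ).toLinearMap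

def hankelMap [CommSemiring k] {n : ℕ} (Λ : Module.Dual k (MvPolynomial (Fin n) k)) :
    MvPolynomial (Fin n) k →ₗ[k] Module.Dual k (MvPolynomial (Fin n) k) where
  toFun f := Λ ∘ₗ LinearMap.mulLeft k f
  map_add' f g := by ext h; simp [add_mul]
  map_smul' c f := by ext h; simp [smul_mul_assoc]

section Hankel

variable [Field k] {n : ℕ} (Λ : Module.Dual k (MvPolynomial (Fin n) k))

theorem mem_hankelKer {f : MvPolynomial (Fin n) k} :
    f ∈ hankelKer Λ ↔ ∀ g, Λ (f * g) = 0 :=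
  Iff.rfl

theorem apply_eq_zero_of_mem_hankelKer {f : MvPolynomial (Fin n) k} (hf : f ∈ hankelKer Λ) :
    Λ f = 0 := by
  simpa using hf 1

theorem ker_hankelMap : LinearMap.ker (hankelMap Λ) = (hankelKer Λ).restrictScalars k := by
  ext f
  simp only [LinearMap.mem_ker, Submodule.restrictScalars_mem, mem_hankelKer, LinearMap.ext_iff]
  rfl

theorem rank_hankelMap :
    LinearMap.rank (hankelMap Λ) = Module.rank k (MvPolynomial (Fin n) k ⧸ hankelKer Λ) :=
  ((Submodule.quotEquivOfEq _ _ (ker_hankelMap Λ)).trans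
    (Submodule.Quotient.restrictScalarsEquiv k _)).symm.trans
    (hankelMap Λ).quotKerEquivRange |>.rank_eq.symm

end Hankel

section Evaluation

variable [Field k] {n : ℕ} {ι : Type*}

theorem evalDual_apply (ζ : Fin n → k) (f : MvPolynomial (Fin n) k) :
    evalDual ζ f = aeval ζ f :=
  rfl

def evalAt (ζ : ι → Fin n → k) : MvPolynomial (Fin n) k →ₐ[k] ι → k :=
  AlgHom.pi fun i ↦ aeval (ζ i)

theorem aeval_injective :
    Function.Injective (aeval : (Fin n → k) → MvPolynomial (Fin n) k →ₐ[k] k) :=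
  fun ζ ζ' h ↦ funext fun t ↦ by simpa using DFunLike.congr_fun h (X t)

-- Interpolation at distinct points: distinct characters are linearly independent (Dedekind–Artin).
theorem evalAt_surjective [Finite ι] {ζ : ι → Fin n → k} (hζ : Function.Injective ζ) :
    Function.Surjective (evalAt ζ) := by
  have hli : LinearIndependent k fun i ↦ (aeval (ζ i) : MvPolynomial (Fin n) k → k) :=
    (linearIndependent_monoidHom (MvPolynomial (Fin n) k) k).comp
      (fun i ↦ (aeval (R := k) (ζ i)).toRingHom.toMonoidHom)
      fun i j h ↦ hζ (aeval_injective (AlgHom.ext fun f ↦ DFunLike.congr_fun h f))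
  rw [← span_flip_eq_top_iff_linearIndependent] at hli
  refine (LinearMap.range_eq_top (f := (evalAt ζ).toLinearMap)).mp ?_
  rw [← hli, ← Submodule.span_eq (LinearMap.range _), LinearMap.coe_range]
  rfl

end Evaluation

section Forward

variable [Field k] {n : ℕ} {ι : Type*} [Fintype ι] {Λ : Module.Dual k (MvPolynomial (Fin n) k)}
  {ζ : ι → Fin n → k} {c : ι → k}

theorem hankelKer_eq_ker_evalAt (hζ : Function.Injective ζ) (hc : ∀ i, c i ≠ 0)
    (hΛ : Λ = ∑ i, c i • evalDual (ζ i)) : hankelKer Λ = RingHom.ker (evalAt ζ) := by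
  classical
  have hΛ_apply (f) : Λ f = ∑ i, c i * aeval (ζ i) f := by simp [hΛ, evalDual_apply]
  ext f
  rw [mem_hankelKer, RingHom.mem_ker]
  refine ⟨fun hf ↦ funext fun i ↦ ?_, fun hf g ↦ ?_⟩
  · -- pair `f` with an interpolating polynomial of the `i`-th point
    obtain ⟨g, hg⟩ := evalAt_surjective hζ (Pi.single i 1)
    have hgj (j) : aeval (ζ j) g = (Pi.single i 1 : ι → k) j := congr_fun hg j
    have := hf g
    simp only [hΛ_apply, map_mul, hgj, Pi.single_apply, mul_ite, mul_one, mul_zero,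
      Finset.sum_ite_eq', Finset.mem_univ, if_true] at this
    exact (mul_eq_zero.mp this).resolve_left (hc i)
  · have hfj (j) : aeval (ζ j) f = 0 := congr_fun hf j
    simp only [hΛ_apply, map_mul, hfj, zero_mul, mul_zero, Finset.sum_const_zero]

theorem rank_hankelMap_eq_card (hζ : Function.Injective ζ) (hc : ∀ i, c i ≠ 0)
    (hΛ : Λ = ∑ i, c i • evalDual (ζ i)) : LinearMap.rank (hankelMap Λ) = Fintype.card ι := by
  rw [rank_hankelMap, hankelKer_eq_ker_evalAt hζ hc hΛ]
  simpa using
    (Ideal.quotientKerAlgEquivOfSurjective (evalAt_surjective hζ)).toLinearEquiv.lift_rank_eq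

theorem isRadical_hankelKer (hζ : Function.Injective ζ) (hc : ∀ i, c i ≠ 0)
    (hΛ : Λ = ∑ i, c i • evalDual (ζ i)) : (hankelKer Λ).IsRadical := by
  rw [hankelKer_eq_ker_evalAt hζ hc hΛ,
    RingHom.ker_isRadical_iff_reduced_of_surjective (evalAt_surjective hζ)]
  infer_instance

end Forward

section Characters

variable [Field k] [IsAlgClosed k] {A : Type*} [CommRing A] [Algebra k A]

theorem exists_algHom_ker_eq [Algebra.IsIntegral k A] (m : Ideal A) [m.IsMaximal] :
    ∃ χ : A →ₐ[k] k, RingHom.ker χ = m := by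
  let := Ideal.Quotient.field m
  let e : k ≃ₐ[k] A ⧸ m :=
    AlgEquiv.ofBijective (Algebra.ofId k _) IsAlgClosed.algebraMap_bijective_of_isIntegral
  refine ⟨e.symm.toAlgHom.comp (Ideal.Quotient.mkₐ k m), ?_⟩
  ext a
  simp [RingHom.mem_ker, Ideal.Quotient.eq_zero_iff_mem]

theorem eq_zero_of_forall_algHom_apply_eq_zero [FiniteDimensional k A] [IsReduced A] {a : A}
    (ha : ∀ χ : A →ₐ[k] k, χ a = 0) : a = 0 := by
  have : IsArtinianRing A := isArtinian_of_tower k inferInstance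
  refine IsNilpotent.eq_zero (nilpotent_iff_mem_prime.mpr fun J hJ ↦ ?_)
  have := (IsArtinianRing.isPrime_iff_isMaximal J).mp hJ
  obtain ⟨χ, hχ⟩ := exists_algHom_ker_eq (k := k) J
  exact hχ ▸ ha χ

theorem span_range_algHom_toLinearMap [FiniteDimensional k A] [IsReduced A] :
    Submodule.span k (Set.range (AlgHom.toLinearMap : (A →ₐ[k] k) → Module.Dual k A)) = ⊤ := by
  rw [← Subspace.dualCoannihilator_dualAnnihilator_eq (W := Submodule.span k _),
    Submodule.dualAnnihilator_eq_top_iff, Submodule.eq_bot_iff]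
  intro a ha
  rw [← SetLike.mem_coe, Submodule.coe_dualCoannihilator_span] at ha
  exact eq_zero_of_forall_algHom_apply_eq_zero fun χ ↦ ha _ ⟨χ, rfl⟩

end Characters

section Backward

variable [Field k] {n : ℕ}

theorem AlgHom.toLinearMap_eq_evalDual (φ : MvPolynomial (Fin n) k →ₐ[k] k) :
    φ.toLinearMap = evalDual (φ ∘ X) := by
  rw [evalDual, ← aeval_unique]

theorem mem_span_range_evalDual [IsAlgClosed k] {Λ : Module.Dual k (MvPolynomial (Fin n) k)}
    [FiniteDimensional k (MvPolynomial (Fin n) k ⧸ hankelKer Λ)] (hrad : (hankelKer Λ).IsRadical) :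
    Λ ∈ Submodule.span k (Set.range evalDual) := by
  set I := hankelKer Λ
  have : IsReduced (MvPolynomial (Fin n) k ⧸ I) := (Ideal.isRadical_iff_quotient_reduced I).mp hrad
  let μ : Module.Dual k (MvPolynomial (Fin n) k ⧸ I) :=
    (I.restrictScalars k).liftQ Λ (fun _ ↦ apply_eq_zero_of_mem_hankelKer Λ) ∘ₗ
      (Submodule.Quotient.restrictScalarsEquiv k I).symm.toLinearMap
  have hμ : (Ideal.Quotient.mkₐ k I).toLinearMap.dualMap μ = Λ := rfl
  have hμ_span : μ ∈ Submodule.span k (Set.range (AlgHom.toLinearMap (R := k))) := by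
    rw [span_range_algHom_toLinearMap]
    trivial
  replace hμ_span := Submodule.mem_map_of_mem
    (f := (Ideal.Quotient.mkₐ k I).toLinearMap.dualMap) hμ_span
  rw [hμ, Submodule.map_span] at hμ_span
  refine Submodule.span_mono ?_ hμ_span
  rintro _ ⟨_, ⟨χ, rfl⟩, rfl⟩
  exact ⟨_, (AlgHom.toLinearMap_eq_evalDual (χ.comp (Ideal.Quotient.mkₐ k I))).symm⟩

theorem exists_eq_sum_evalDual [IsAlgClosed k] {r : ℕ}
    {Λ : Module.Dual k (MvPolynomial (Fin n) k)} (hrank : LinearMap.rank (hankelMap Λ) = r)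
    (hrad : (hankelKer Λ).IsRadical) :
    ∃ (ζ : Fin r → Fin n → k) (lam : Fin r → k), Function.Injective ζ ∧
      (∀ i, lam i ≠ 0) ∧ Λ = ∑ i, lam i • evalDual (ζ i) := by
  have : FiniteDimensional k (MvPolynomial (Fin n) k ⧸ hankelKer Λ) :=
    Module.finite_of_rank_eq_nat (rank_hankelMap Λ ▸ hrank)
  obtain ⟨c, hc⟩ := Finsupp.mem_span_range_iff_exists_finsupp.mp (mem_span_range_evalDual hrad)
  have hΛ : Λ = ∑ ζ : c.support, c ζ • evalDual (ζ : Fin n → k) := by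
    rw [← hc, Finsupp.sum, ← Finset.sum_coe_sort]
  have hc_ne (ζ : c.support) : c ζ ≠ 0 := Finsupp.mem_support_iff.mp ζ.2
  have hcard : c.support.card = r := by
    simpa [hrank] using (rank_hankelMap_eq_card Subtype.val_injective hc_ne hΛ).symm
  let e := c.support.equivFinOfCardEq hcard
  refine ⟨fun i ↦ e.symm i, fun i ↦ c (e.symm i), Subtype.val_injective.comp e.symm.injective,
    fun i ↦ hc_ne _, ?_⟩
  rw [hΛ]
  exact (e.symm.sum_comp fun ζ ↦ c ζ • evalDual (ζ : Fin n → k)).symm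

end Backward

theorem stmt9_general [Field k] [IsAlgClosed k] {n r : ℕ}
    (Λ : Module.Dual k (MvPolynomial (Fin n) k)) :
    (∃ (ζ : Fin r → (Fin n → k)) (lam : Fin r → k), Function.Injective ζ ∧
        (∀ i, lam i ≠ 0) ∧ Λ = ∑ i, lam i • evalDual (ζ i)) ↔
      (LinearMap.rank (hankelMap Λ) = r ∧ (hankelKer Λ).IsRadical) := by
  constructor
  · rintro ⟨ζ, lam, hζ, hlam, hΛ⟩
    exact ⟨by simpa using rank_hankelMap_eq_card hζ hlam hΛ, isRadical_hankelKer hζ hlam hΛ⟩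
  · rintro ⟨hrank, hrad⟩
    exact exists_eq_sum_evalDual hrank hrad

theorem stmt9 [Field k] [IsAlgClosed k] [CharZero k] {n r : ℕ}
    (Λ : Module.Dual k (MvPolynomial (Fin n) k)) :
    (∃ (ζ : Fin r → (Fin n → k)) (lam : Fin r → k), Function.Injective ζ ∧
        (∀ i, lam i ≠ 0) ∧ Λ = ∑ i, lam i • evalDual (ζ i)) ↔
      (LinearMap.rank (hankelMap Λ) = r ∧ (hankelKer Λ).IsRadical) :=
  stmt9_general Λ

end
end

section
/- Let F be a homogeneous polynomial of degree d in n+1 variables with Waring rank r, and let f(x₁,...,xₙ) = F(1,x₁,...,xₙ) be its dehomogenization. Then the catalecticant-type matrix H^□_{f*} = (f*(x^{α+β})) indexed by |α| ≤ ⌈d/2⌉, |β| ≤ ⌊d/2⌋ has rank at most r. -/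
/-!
If `F = ∑ λᵢ Lᵢ ^ d` with `Lᵢ = ∑ⱼ cᵢⱼ xⱼ`, the multinomial theorem shows that the dual `f*` of the
dehomogenization sends `x ^ γ` to `∑ λᵢ cᵢ₀ ^ (d - |γ|) cᵢ ^ γ`: the weights `binom(d, γ)` of the
apolar product cancel the multinomial coefficients of `Lᵢ ^ d`. Splitting `d = ⌈d/2⌉ + ⌊d/2⌋`, each
summand evaluated at `x ^ (α + β)` factors into a function of `α` times a function of `β`, so the
matrix is a sum of `r` matrices of rank at most one.
-/

open MvPolynomial

noncomputable section

variable {k : Type*}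

/-- Dehomogenization with respect to the variable `x₀`. -/
def dehom [CommSemiring k] {n : ℕ} (F : MvPolynomial (Fin (n+1)) k) :
    MvPolynomial (Fin n) k :=
  aeval (fun i => Fin.cases 1 X i) F

section Homogeneous

variable {R : Type*} [CommSemiring R]

theorem eq_sum_coeff_smul_X_of_isHomogeneous_one {σ : Type*} [Fintype σ]
    {L : MvPolynomial σ R} (hL : L.IsHomogeneous 1) :
    L = ∑ i, coeff (Finsupp.single i 1) L • X i := by
  classical
  ext e
  simp only [coeff_sum, coeff_smul, coeff_X, smul_eq_mul, mul_ite, mul_one, mul_zero]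
  by_cases he : coeff e L = 0
  · rw [he]
    exact (Finset.sum_eq_zero fun i _ => by split_ifs with h <;> simp [h, he]).symm
  · obtain ⟨a, rfl⟩ := (Finsupp.sum_eq_one_iff e).mp (by simpa [Finsupp.weight_apply] using hL he)
    simp [Finsupp.single_left_inj one_ne_zero]

theorem coeff_pow_of_isHomogeneous_one {σ : Type*} [Fintype σ]
    {L : MvPolynomial σ R} (hL : L.IsHomogeneous 1) (s : σ →₀ ℕ) (d : ℕ) :
    coeff s (L ^ d) = if (s.sum fun _ m => m) = d then
      s.multinomial * s.prod (fun i m => coeff (Finsupp.single i 1) L ^ m) else 0 := by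
  conv_lhs => rw [eq_sum_coeff_smul_X_of_isHomogeneous_one hL]
  exact coeff_linearCombination_X_pow_of_fintype _ s d

theorem dehom_eq_eval_finSuccEquiv {n : ℕ} (G : MvPolynomial (Fin (n+1)) R) :
    dehom G = (finSuccEquiv R n G).eval 1 := by
  unfold dehom
  induction G using MvPolynomial.induction_on with
  | C a => simp [finSuccEquiv_apply]
  | add p q hp hq => rw [map_add, map_add, Polynomial.eval_add, hp, hq]
  | mul_X p i ih =>
    rw [map_mul, map_mul, Polynomial.eval_mul, ih]
    cases i using Fin.cases <;> simp [finSuccEquiv_X_zero, finSuccEquiv_X_succ]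

theorem coeff_dehom_of_isHomogeneous {n d : ℕ} {G : MvPolynomial (Fin (n+1)) R}
    (hG : G.IsHomogeneous d) (γ : Fin n →₀ ℕ) :
    coeff γ (dehom G) = coeff (γ.cons (d - γ.sum fun _ m => m)) G := by
  rw [dehom_eq_eval_finSuccEquiv, Polynomial.eval_eq_sum, Polynomial.sum_def, coeff_sum]
  simp only [one_pow, mul_one, finSuccEquiv_coeff_coeff]
  refine Finset.sum_eq_single _ (fun e _ he => ?_) (fun h => ?_)
  · by_contra hne
    have hdeg := hG hne
    simp only [Finsupp.weight_apply, Pi.one_apply, smul_eq_mul, mul_one, Finsupp.sum_cons] at hdeg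
    omega
  · rw [← finSuccEquiv_coeff_coeff, Polynomial.notMem_support_iff.mp h, coeff_zero]

end Homogeneous

/-- The coordinate of the degree-`e` Veronese image of the point `c` at the monomial
`x₀ ^ (e - |α|) * x ^ α`. -/
def veronese {R : Type*} [CommMonoid R] {n : ℕ} (e : ℕ) (c : Fin (n+1) → R)
    (α : Fin n →₀ ℕ) : R :=
  (α.cons (e - α.sum fun _ m => m)).prod fun j m => c j ^ m

theorem veronese_add {R : Type*} [CommMonoid R] {n e₁ e₂ : ℕ} (c : Fin (n+1) → R)
    {α β : Fin n →₀ ℕ} (hα : (α.sum fun _ m => m) ≤ e₁) (hβ : (β.sum fun _ m => m) ≤ e₂) :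
    veronese (e₁ + e₂) c (α + β) = veronese e₁ c α * veronese e₂ c β := by
  have hsum : ((α + β).sum fun _ m => m) = (α.sum fun _ m => m) + β.sum fun _ m => m :=
    Finsupp.sum_add_index' (fun _ => rfl) fun _ _ _ => rfl
  have hcons : (α + β).cons (e₁ + e₂ - (α + β).sum fun _ m => m)
      = α.cons (e₁ - α.sum fun _ m => m) + β.cons (e₂ - β.sum fun _ m => m) := by
    ext j
    cases j using Fin.cases <;> simp [hsum]; omega
  rw [veronese, hcons, Finsupp.prod_add_index' (fun _ => pow_zero _) fun _ _ _ => pow_add _ _ _]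
  rfl

theorem finrank_span_range_le_of_forall_mem_span {K V ι κ : Type*} [DivisionRing K]
    [AddCommGroup V] [Module K V] [Fintype κ] (v : ι → V) (w : κ → V)
    (hv : ∀ i, v i ∈ Submodule.span K (Set.range w)) :
    Module.finrank K (Submodule.span K (Set.range v)) ≤ Fintype.card κ :=
  have : FiniteDimensional K (Submodule.span K (Set.range w)) :=
    FiniteDimensional.span_of_finite K (Set.finite_range w)
  (Submodule.finrank_mono (Submodule.span_le.mpr (Set.range_subset_iff.mpr hv))).trans
    (finrank_range_le_card w)

section Apolar

variable [Field k] {n : ℕ}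

theorem apolar_monomial_one (d : ℕ) (f : MvPolynomial (Fin n) k) (γ : Fin n →₀ ℕ) :
    apolar d f (monomial γ 1) = coeff γ f / mBin d γ := by
  classical
  simp only [apolar, coeff_monomial, mul_ite, mul_one, mul_zero, ite_div, zero_div,
    Finset.sum_ite_eq, mem_support_iff]
  split_ifs with h
  · rfl
  · rw [not_not.mp h, zero_div]

theorem apolar_sum_smul_monomial_one {ι : Type*} (s : Finset ι) (d : ℕ) (a : ι → k)
    (f : ι → MvPolynomial (Fin n) k) (γ : Fin n →₀ ℕ) :
    apolar d (∑ i ∈ s, a i • f i) (monomial γ 1)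
      = ∑ i ∈ s, a i * apolar d (f i) (monomial γ 1) := by
  simp only [apolar_monomial_one, coeff_sum, coeff_smul, smul_eq_mul, Finset.sum_div,
    mul_div_assoc]

variable [CharZero k]

theorem mBin_eq_multinomial {d : ℕ} {γ : Fin n →₀ ℕ} (hγ : (γ.sum fun _ m => m) ≤ d) :
    (mBin d γ : k) = (γ.cons (d - γ.sum fun _ m => m)).multinomial := by
  have hspec := Nat.multinomial_spec Finset.univ (γ.cons (d - γ.sum fun _ m => m))
  rw [← Finsupp.multinomial_eq_of_support_subset (Finset.subset_univ _)] at hspec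
  have hsum : (γ.sum fun _ m => m) = ∑ i, γ i := Finsupp.sum_fintype _ _ fun _ => rfl
  simp only [Fin.prod_univ_succ, Fin.sum_univ_succ, Finsupp.cons_zero, Finsupp.cons_succ,
    hsum] at hspec hγ ⊢
  rw [Nat.sub_add_cancel hγ] at hspec
  rw [mBin, Finsupp.prod_fintype _ _ (fun _ => rfl), hsum,
    div_eq_iff (by simp [Finset.prod_ne_zero_iff, Nat.factorial_ne_zero]), ← hspec]
  push_cast
  ring

theorem apolar_dehom_pow_monomial_one {L : MvPolynomial (Fin (n+1)) k}
    (hL : L.IsHomogeneous 1) {d : ℕ} {γ : Fin n →₀ ℕ} (hγ : (γ.sum fun _ m => m) ≤ d) :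
    apolar d (dehom (L ^ d)) (monomial γ 1)
      = veronese d (fun j => coeff (Finsupp.single j 1) L) γ := by
  have hLd : (L ^ d).IsHomogeneous d := by simpa using hL.pow d
  rw [apolar_monomial_one, coeff_dehom_of_isHomogeneous hLd, coeff_pow_of_isHomogeneous_one hL,
    if_pos (by rw [Finsupp.sum_cons]; omega), mBin_eq_multinomial hγ, mul_div_cancel_left₀]
  · rfl
  · exact Nat.cast_ne_zero.mpr (Finsupp.multinomial_eq _ ▸ Nat.multinomial_pos _ _).ne'

theorem apolar_dehom_sum_smul_pow_monomial_add {ι : Type*} [Fintype ι] {d e₁ e₂ : ℕ}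
    (hd : e₁ + e₂ = d) (lam : ι → k) {L : ι → MvPolynomial (Fin (n+1)) k}
    (hL : ∀ i, (L i).IsHomogeneous 1) {α β : Fin n →₀ ℕ}
    (hα : (α.sum fun _ m => m) ≤ e₁) (hβ : (β.sum fun _ m => m) ≤ e₂) :
    apolar d (dehom (∑ i, lam i • L i ^ d)) (monomial (α + β) 1)
      = ∑ i, (lam i * veronese e₂ (fun j => coeff (Finsupp.single j 1) (L i)) β)
          * veronese e₁ (fun j => coeff (Finsupp.single j 1) (L i)) α := by
  have hαβ : ((α + β).sum fun _ m => m) ≤ d := by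
    rw [Finsupp.sum_add_index' (fun _ => rfl) fun _ _ _ => rfl]; omega
  have hlin : dehom (∑ i, lam i • L i ^ d) = ∑ i, lam i • dehom (L i ^ d) := by
    simp only [dehom, map_sum, map_smul]
  rw [hlin, apolar_sum_smul_monomial_one]
  refine Finset.sum_congr rfl fun i _ => ?_
  rw [apolar_dehom_pow_monomial_one (hL i) hαβ, ← hd, veronese_add _ hα hβ]
  ring

end Apolar

theorem stmt10_general [Field k] [CharZero k] {n d r : ℕ}
    (F : MvPolynomial (Fin (n+1)) k)
    (hex : ∃ (lam : Fin r → k) (L : Fin r → MvPolynomial (Fin (n+1)) k),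
        (∀ i, (L i).IsHomogeneous 1) ∧ F = ∑ i, lam i • L i ^ d) :
    Module.finrank k (Submodule.span k (Set.range
      fun β : {β : Fin n →₀ ℕ // (β.sum fun _ m => m) ≤ d / 2} =>
        fun α : {α : Fin n →₀ ℕ // (α.sum fun _ m => m) ≤ (d + 1) / 2} =>
          apolar d (dehom F) (monomial (α.1 + β.1) (1 : k)))) ≤ r := by
  obtain ⟨lam, L, hL, rfl⟩ := hex
  set c : Fin r → Fin (n+1) → k := fun i j => coeff (Finsupp.single j 1) (L i)
  have hcol (β : {β : Fin n →₀ ℕ // (β.sum fun _ m => m) ≤ d / 2}) :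
      (fun α : {α : Fin n →₀ ℕ // (α.sum fun _ m => m) ≤ (d + 1) / 2} =>
        apolar d (dehom (∑ i, lam i • L i ^ d)) (monomial (α.1 + β.1) (1 : k)))
        = ∑ i, (lam i * veronese (d / 2) (c i) β.1) •
            fun α => veronese ((d + 1) / 2) (c i) α.1 := by
    funext α
    rw [apolar_dehom_sum_smul_pow_monomial_add (by omega) lam hL α.2 β.2, Finset.sum_apply]
    rfl
  refine (finrank_span_range_le_of_forall_mem_span _
    (fun i (α : {α : Fin n →₀ ℕ // (α.sum fun _ m => m) ≤ (d + 1) / 2}) =>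
      veronese ((d + 1) / 2) (c i) α.1) fun β => ?_).trans_eq (Fintype.card_fin r)
  rw [hcol]
  exact Submodule.sum_mem _ fun i _ => Submodule.smul_mem _ _ (Submodule.subset_span ⟨i, rfl⟩)

theorem stmt10 [Field k] [IsAlgClosed k] [CharZero k] {n d r : ℕ}
    (F : MvPolynomial (Fin (n+1)) k) (hF : F.IsHomogeneous d)
    (hex : ∃ (lam : Fin r → k) (L : Fin r → MvPolynomial (Fin (n+1)) k),
        (∀ i, (L i).IsHomogeneous 1) ∧ F = ∑ i, lam i • L i ^ d)
    (hmin : ∀ (r' : ℕ) (lam : Fin r' → k) (L : Fin r' → MvPolynomial (Fin (n+1)) k),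
        (∀ i, (L i).IsHomogeneous 1) → F = ∑ i, lam i • L i ^ d → r ≤ r') :
    Module.finrank k (Submodule.span k (Set.range
      fun β : {β : Fin n →₀ ℕ // (β.sum fun _ m => m) ≤ d / 2} =>
        fun α : {α : Fin n →₀ ℕ // (α.sum fun _ m => m) ≤ (d + 1) / 2} =>
          apolar d (dehom F) (monomial (α.1 + β.1) (1 : k)))) ≤ r :=
  stmt10_general F hex

end
end

section
/- Let I ⊆ R = k[x₁,...,xₙ] be a zero-dimensional ideal with V(I) = {ζ₁,...,ζ_d} and minimal primary decomposition I = Q₁ ∩ ... ∩ Q_d where Qᵢ is primary to the maximal ideal m_{ζᵢ}. Then the apolar set satisfies I^⊥ = Q₁^⊥ ⊕ ... ⊕ Q_d^⊥ (internal direct sum inside R*). Moreover if I is radical, every Λ ∈ I^⊥ is a k-linear combination of the evaluation functionals 𝟙_{ζ₁},...,𝟙_{ζ_d}. -/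
/-!
Distinct points give distinct, hence comaximal, maximal ideals `m_ζ`; since `Q i ⊔ Q j` has radical
`m_{ζ i} ⊔ m_{ζ j} = ⊤`, the `Q i` are pairwise comaximal. A functional vanishing on `Q i` and on
`⋂_{j ≠ i} Q j` then vanishes on their sum, which is the whole ring: this is the independence.
The annihilator of a finite intersection of subspaces is the sum of the annihilators. In the
radical case `I = ⋂ m_{ζ i}` is the common kernel of the evaluations `𝟙_{ζ i}`, and a functional
vanishing on the common kernel of finitely many functionals lies in their span.
-/

open MvPolynomial

noncomputable section

variable {k : Type*}

namespace MvPolynomial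

variable {R σ : Type*} [CommRing R]

theorem sub_C_eval_mem_span_X_sub_C (a : σ → R) (p : MvPolynomial σ R) :
    p - C (eval a p) ∈ Ideal.span (Set.range fun j => X j - C (a j)) := by
  induction p using MvPolynomial.induction_on with
  | C c => simp
  | add p q hp hq => simpa [add_sub_add_comm] using add_mem hp hq
  | mul_X p j hp =>
    have hj : X j - C (a j) ∈ Ideal.span (Set.range fun j => X j - C (a j)) :=
      Ideal.subset_span ⟨j, rfl⟩
    convert add_mem (Ideal.mul_mem_left _ p hj) (Ideal.mul_mem_right (C (a j)) _ hp) using 1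
    simp only [eval_X, map_mul]
    ring

theorem ker_eval_eq_span_X_sub_C (a : σ → R) :
    RingHom.ker (eval a) = Ideal.span (Set.range fun j => X j - C (a j)) := by
  refine le_antisymm (fun p hp => ?_) (Ideal.span_le.mpr ?_)
  · simpa [RingHom.mem_ker.mp hp] using sub_C_eval_mem_span_X_sub_C a p
  · rintro _ ⟨j, rfl⟩
    simp

theorem span_X_sub_C_sup_eq_top {K : Type*} [Field K] {a b : σ → K} (h : a ≠ b) :
    Ideal.span (Set.range fun j => X j - C (a j)) ⊔
      Ideal.span (Set.range fun j => X j - C (b j)) = ⊤ := by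
  obtain ⟨l, hl⟩ := Function.ne_iff.mp h
  have hmem : X l - C (a l) - (X l - C (b l)) ∈ Ideal.span (Set.range fun j => X j - C (a j)) ⊔
      Ideal.span (Set.range fun j => X j - C (b j)) :=
    sub_mem (Submodule.mem_sup_left (Ideal.subset_span ⟨l, rfl⟩))
      (Submodule.mem_sup_right (Ideal.subset_span ⟨l, rfl⟩))
  rw [sub_sub_sub_cancel_left, ← map_sub] at hmem
  exact Ideal.eq_top_of_isUnit_mem _ hmem ((sub_ne_zero.mpr hl.symm).isUnit.map C)

end MvPolynomial

theorem Ideal.radical_iInf_of_finite {R ι : Type*} [CommSemiring R] [Finite ι]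
    (I : ι → Ideal R) : (⨅ i, I i).radical = ⨅ i, (I i).radical := by
  have := Fintype.ofFinite ι
  rw [← Finset.inf_univ_eq_iInf, ← Finset.inf_univ_eq_iInf, ← radicalInfTopHom_apply,
    map_finset_inf]
  rfl

theorem Ideal.sup_eq_top_of_radical_sup_eq_top {R : Type*} [CommSemiring R] {I J : Ideal R}
    (h : I.radical ⊔ J.radical = ⊤) : I ⊔ J = ⊤ := by
  rw [← Ideal.radical_eq_top, Ideal.radical_sup, h, Ideal.radical_top]

theorem iSupIndep_dualAnnihilator_of_pairwise_sup_eq_top {K R ι : Type*} [CommSemiring K]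
    [CommRing R] [Algebra K R] [Fintype ι] {Q : ι → Ideal R}
    (hQ : Pairwise fun i j => Q i ⊔ Q j = ⊤) :
    iSupIndep fun i => ((Q i).restrictScalars K).dualAnnihilator := by
  classical
  intro i
  have hcop : Q i ⊔ ⨅ j ∈ Finset.univ.erase i, Q j = ⊤ :=
    Ideal.sup_iInf_eq_top fun j hj => hQ (Finset.ne_of_mem_erase hj).symm
  have hle : ⨆ (j) (_ : j ≠ i), ((Q j).restrictScalars K).dualAnnihilator ≤
      ((⨅ j ∈ Finset.univ.erase i, Q j).restrictScalars K).dualAnnihilator :=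
    iSup₂_le fun j hj => Submodule.dualAnnihilator_anti <|
      Submodule.restrictScalars_mono K (biInf_le Q (Finset.mem_erase.mpr ⟨hj, Finset.mem_univ j⟩))
  rw [disjoint_iff, ← le_bot_iff]
  calc _ ≤ ((Q i).restrictScalars K).dualAnnihilator ⊓
        ((⨅ j ∈ Finset.univ.erase i, Q j).restrictScalars K).dualAnnihilator :=
        inf_le_inf_left _ hle
    _ = ⊥ := by
      rw [← Submodule.dualAnnihilator_sup_eq, ← Submodule.restrictScalars_sup, hcop,
        Submodule.restrictScalars_top, Submodule.dualAnnihilator_top]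

theorem exists_eq_sum_smul_evalDual_of_iInf_ker_eval_le [Field k] {n d : ℕ}
    (ζ : Fin d → Fin n → k) {I : Ideal (MvPolynomial (Fin n) k)}
    (hI : ⨅ i, RingHom.ker (eval (ζ i)) ≤ I) {Λ : Module.Dual k (MvPolynomial (Fin n) k)}
    (hΛ : Λ ∈ (I.restrictScalars k).dualAnnihilator) :
    ∃ c : Fin d → k, Λ = ∑ i, c i • evalDual (ζ i) := by
  have hker : ⨅ i, LinearMap.ker (evalDual (ζ i)) ≤ LinearMap.ker Λ := by
    intro p hp
    simp only [Submodule.mem_iInf, LinearMap.mem_ker, evalDual, AlgHom.toLinearMap_apply] at hp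
    exact (Submodule.mem_dualAnnihilator _).mp hΛ p
      (hI (Ideal.mem_iInf.mpr fun i => RingHom.mem_ker.mpr (hp i)))
  obtain ⟨c, hc⟩ := (Submodule.mem_span_range_iff_exists_fun k).mp (mem_span_of_iInf_ker_le_ker hker)
  exact ⟨c, hc.symm⟩

theorem stmt17_general [Field k] {n d : ℕ}
    (I : Ideal (MvPolynomial (Fin n) k))
    (ζ : Fin d → (Fin n → k)) (hζ : Function.Injective ζ)
    (Q : Fin d → Ideal (MvPolynomial (Fin n) k))
    (hQrad : ∀ i, (Q i).radical =
        Ideal.span (Set.range fun j => X j - C (ζ i j)))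
    (hI : I = ⨅ i, Q i) :
    (Submodule.dualAnnihilator (Submodule.restrictScalars k I) =
        ⨆ i, Submodule.dualAnnihilator (Submodule.restrictScalars k (Q i))) ∧
    (iSupIndep fun i =>
        Submodule.dualAnnihilator (Submodule.restrictScalars k (Q i))) ∧
    (I.IsRadical → ∀ Λ ∈ Submodule.dualAnnihilator (Submodule.restrictScalars k I),
        ∃ c : Fin d → k, Λ = ∑ i, c i • evalDual (ζ i)) := by
  have hcop : Pairwise fun i j => Q i ⊔ Q j = ⊤ := fun i j hij =>
    Ideal.sup_eq_top_of_radical_sup_eq_top <| by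
      rw [hQrad, hQrad]
      exact span_X_sub_C_sup_eq_top (hζ.ne hij)
  refine ⟨?_, iSupIndep_dualAnnihilator_of_pairwise_sup_eq_top hcop, fun hrad Λ hΛ => ?_⟩
  · rw [hI, Submodule.restrictScalars_iInf, Subspace.dualAnnihilator_iInf_eq]
  · refine exists_eq_sum_smul_evalDual_of_iInf_ker_eval_le ζ (le_of_eq ?_) hΛ
    calc ⨅ i, RingHom.ker (eval (ζ i)) = ⨅ i, (Q i).radical := by
          simp only [ker_eval_eq_span_X_sub_C, hQrad]
      _ = I := by rw [← Ideal.radical_iInf_of_finite, ← hI, hrad.radical]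

theorem stmt17 [Field k] [IsAlgClosed k] [CharZero k] {n d : ℕ}
    (I : Ideal (MvPolynomial (Fin n) k))
    (hfin : FiniteDimensional k (MvPolynomial (Fin n) k ⧸ I))
    (ζ : Fin d → (Fin n → k)) (hζ : Function.Injective ζ)
    (hV : {x : Fin n → k | ∀ f ∈ I, eval x f = 0} = Set.range ζ)
    (Q : Fin d → Ideal (MvPolynomial (Fin n) k))
    (hQ : ∀ i, (Q i).IsPrimary)
    (hQrad : ∀ i, (Q i).radical =
        Ideal.span (Set.range fun j => X j - C (ζ i j)))
    (hI : I = ⨅ i, Q i) :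
    (Submodule.dualAnnihilator (Submodule.restrictScalars k I) =
        ⨆ i, Submodule.dualAnnihilator (Submodule.restrictScalars k (Q i))) ∧
    (iSupIndep fun i =>
        Submodule.dualAnnihilator (Submodule.restrictScalars k (Q i))) ∧
    (I.IsRadical → ∀ Λ ∈ Submodule.dualAnnihilator (Submodule.restrictScalars k I),
        ∃ c : Fin d → k, Λ = ∑ i, c i • evalDual (ζ i)) :=
  stmt17_general I ζ hζ Q hQrad hI

end
end
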